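/- If Z is a standard normal random variable, then for every positive integer k, E|Z^2 − 1|^k ≤ 4^k (⌈k/2⌉!)^2. -/

import Mathlib

/-!
Pointwise, `|Z² - 1|^k ≤ Z^{2k} + 1`, and the Gamma integral gives `E Z^{2k} = (2k - 1)‼ ≤ 2^k k!`.
With `m = ⌈k/2⌉` we have `k - m ≤ m`, so `k! = C(k, m) m! (k - m)! ≤ C(k, m) (m!)² < 2^k (m!)²`,
and the strict inequality absorbs the `+ 1`.
-/

open MeasureTheory ProbabilityTheory Real Set
open scoped Nat NNReal

lemma integral_pow_two_mul_mul_exp_neg_sq_div_two (k : ℕ) :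
    ∫ x : ℝ, x ^ (2 * k) * exp (-x ^ 2 / 2) = √(2 * π) * (2 * k - 1 : ℕ)‼ := by
  have hIoi : ∫ x in Ioi (0 : ℝ), x ^ (2 * k) * exp (-x ^ 2 / 2)
      = (1 / 2 : ℝ) ^ (-((2 * k : ℕ) + 1 : ℝ) / 2) * (1 / 2) * Gamma (k + 1 / 2) := by
    rw [← show (((2 * k : ℕ) : ℝ) + 1) / 2 = k + 1 / 2 by push_cast; ring,
      ← integral_rpow_mul_exp_neg_mul_rpow two_pos (neg_one_lt_zero.trans_le (Nat.cast_nonneg _))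
        one_half_pos]
    refine setIntegral_congr_fun measurableSet_Ioi fun x _ => ?_
    simp only [rpow_natCast, rpow_two]
    ring_nf
  calc ∫ x : ℝ, x ^ (2 * k) * exp (-x ^ 2 / 2)
      = ∫ x : ℝ, |x| ^ (2 * k) * exp (-|x| ^ 2 / 2) := by
        simp only [(even_two_mul k).pow_abs, sq_abs]
    _ = 2 * ∫ x in Ioi (0 : ℝ), x ^ (2 * k) * exp (-x ^ 2 / 2) :=
        integral_comp_abs (f := fun x => x ^ (2 * k) * exp (-x ^ 2 / 2))
    _ = √(2 * π) * (2 * k - 1 : ℕ)‼ := by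
        have h2 : (1 / 2 : ℝ) ^ (-((2 * k : ℕ) + 1 : ℝ) / 2) = 2 ^ k * √2 := by
          rw [one_div, inv_rpow two_pos.le, ← rpow_neg two_pos.le, neg_div, neg_neg,
            show (((2 * k : ℕ) : ℝ) + 1) / 2 = k + 1 / 2 by push_cast; ring,
            rpow_add two_pos, rpow_natCast, ← sqrt_eq_rpow]
        rw [hIoi, Gamma_nat_add_half, h2, sqrt_mul two_pos.le]
        field_simp

lemma integral_pow_two_mul_gaussianReal_zero_one (k : ℕ) :
    ∫ x, x ^ (2 * k) ∂gaussianReal 0 1 = (2 * k - 1 : ℕ)‼ := by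
  have hpdf : ∀ x, gaussianPDFReal 0 1 x • x ^ (2 * k)
      = (√(2 * π))⁻¹ * (x ^ (2 * k) * exp (-x ^ 2 / 2)) := fun x => by
    simp only [gaussianPDFReal, NNReal.coe_one, mul_one, sub_zero, smul_eq_mul]
    ring
  rw [integral_gaussianReal_eq_integral_smul one_ne_zero]
  simp only [hpdf]
  rw [integral_const_mul, integral_pow_two_mul_mul_exp_neg_sq_div_two]
  field_simp

lemma integral_pow_two_mul_gaussianReal_zero (v : ℝ≥0) (k : ℕ) :
    ∫ x, x ^ (2 * k) ∂gaussianReal 0 v = v ^ k * (2 * k - 1 : ℕ)‼ := by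
  have hmap : (gaussianReal 0 1).map (fun x => √v * x) = gaussianReal 0 v := by
    rw [gaussianReal_map_const_mul, mul_zero, mul_one]
    congr
    exact sq_sqrt v.coe_nonneg
  rw [← hmap, integral_map (by fun_prop) (by fun_prop)]
  simp only [mul_pow]
  rw [integral_const_mul, integral_pow_two_mul_gaussianReal_zero_one, pow_mul,
    sq_sqrt v.coe_nonneg]

lemma integrable_pow_gaussianReal (μ : ℝ) (v : ℝ≥0) (n : ℕ) :
    Integrable (fun x => x ^ n) (gaussianReal μ v) := by
  refine (memLp_id_gaussianReal n).integrable_norm_pow'.mono' (by fun_prop) ?_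
  filter_upwards with x
  simp

lemma abs_sub_pow_le_pow_add_pow {a b : ℝ} (ha : 0 ≤ a) (hb : 0 ≤ b) (k : ℕ) :
    |a - b| ^ k ≤ a ^ k + b ^ k := by
  have hmax : |a - b| ≤ max a b := abs_sub_le_iff.2 ⟨by grind, by grind⟩
  calc |a - b| ^ k ≤ max a b ^ k := pow_le_pow_left₀ (abs_nonneg _) hmax k
    _ ≤ a ^ k + b ^ k := by
      rcases max_choice a b with h | h <;> rw [h] <;> nlinarith [pow_nonneg ha k, pow_nonneg hb k]

namespace Nat

lemma doubleFactorial_two_mul_sub_one_le (k : ℕ) : (2 * k - 1)‼ ≤ 2 ^ k * k ! := by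
  induction k with
  | zero => rfl
  | succ k ih =>
    rw [show 2 * (k + 1) - 1 = 2 * k + 1 by omega, doubleFactorial_add_one,
      factorial_succ, pow_succ]
    calc (2 * k + 1) * (2 * k - 1)‼ ≤ (2 * k + 2) * (2 ^ k * k !) := by gcongr; omega
      _ = 2 ^ k * 2 * ((k + 1) * k !) := by ring

lemma two_pow_mul_factorial_lt {k m : ℕ} (hk : 0 < k) (hmk : m ≤ k) (hkm : k ≤ 2 * m) :
    2 ^ k * k ! < 4 ^ k * m ! ^ 2 := by
  have hfac : k ! ≤ k.choose m * m ! ^ 2 := by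
    rw [← choose_mul_factorial_mul_factorial hmk, sq, ← mul_assoc]
    gcongr
    omega
  calc 2 ^ k * k ! ≤ 2 ^ k * (k.choose m * m ! ^ 2) := by gcongr
    _ < 2 ^ k * (2 ^ k * m ! ^ 2) := by
      gcongr
      exact choose_lt_two_pow k m hk
    _ = 4 ^ k * m ! ^ 2 := by rw [show 4 = 2 * 2 from rfl, mul_pow]; ring

end Nat

/-- For `Z` standard normal and every positive integer `k`,
`E|Z² − 1|^k ≤ 4^k (⌈k/2⌉!)²`. -/
theorem stmt4 (k : ℕ) (hk : 1 ≤ k) :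
    (∫ z, |z ^ 2 - 1| ^ k ∂(gaussianReal 0 1)) ≤
      (4 : ℝ) ^ k * ((Nat.factorial (Nat.ceil ((k : ℝ) / 2)) : ℝ) : ℝ) ^ 2 := by
  set m := ⌈(k : ℝ) / 2⌉₊
  have hkm : k ≤ 2 * m := by
    have := Nat.le_ceil ((k : ℝ) / 2)
    exact_mod_cast (show (k : ℝ) ≤ 2 * m by linarith)
  have hmk : m ≤ k := Nat.ceil_le.2 (half_le_self k.cast_nonneg)
  have hbound (z : ℝ) : |z ^ 2 - 1| ^ k ≤ z ^ (2 * k) + 1 := by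
    simpa [pow_mul] using abs_sub_pow_le_pow_add_pow (sq_nonneg z) zero_le_one k
  have hint := integrable_pow_gaussianReal 0 1 (2 * k)
  calc ∫ z, |z ^ 2 - 1| ^ k ∂gaussianReal 0 1
      ≤ ∫ z, (z ^ (2 * k) + 1) ∂gaussianReal 0 1 :=
        integral_mono_of_nonneg (ae_of_all _ fun z => by positivity)
          (hint.add (integrable_const 1)) (ae_of_all _ hbound)
    _ = (2 * k - 1 : ℕ)‼ + 1 := by
        rw [integral_add hint (integrable_const 1), integral_pow_two_mul_gaussianReal_zero]
        simp
    _ ≤ 2 ^ k * k ! + 1 := by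
        gcongr
        exact_mod_cast Nat.doubleFactorial_two_mul_sub_one_le k
    _ ≤ 4 ^ k * m ! ^ 2 := by
        exact_mod_cast Nat.two_pow_mul_factorial_lt hk hmk hkm
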